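/- Let π* be a finitely supported maximizer of the relaxed problem at q̄₀. Then for every q' in the support of π*, the value of the relaxed problem at q' is zero: J̄(q') = 0. (Key step in the proof of the paper's Proposition 3.) -/

import Mathlib

/-! Suppose some `ν` feasible at a support point `q'` of `π*` had `∫ (H - H q') dν > 0`. Since
`π*` is finitely supported, `q'` is an atom of mass `p > 0`. Spreading this atom according to
`ν` gives a new measure with the same barycenter `q̄₀`; both integrals in the constraint change
by `p` times the corresponding integrals of `ν` at `q'`, so the constraint still holds, while the
objective grows by `p ρ ∫ (H - H q') dν > 0`, contradicting maximality of `π*`. Hence every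
feasible value at `q'` is `≤ 0`, and `0` is attained by the Dirac mass at `q'`. -/

open MeasureTheory ProbabilityTheory Filter Set
open scoped NNReal ENNReal

/-- `û(q) = max_{a ∈ A} ∑_{x ∈ X} q_x u_{a,x}`. -/
noncomputable def uhat {X A : Type*} [Fintype X] [Fintype A] [Nonempty A]
    (u : A → X → ℝ) (q : X → ℝ) : ℝ :=
  ⨆ a : A, ∑ x : X, q x * u a x

/-- `π` is feasible in the relaxed problem at `q`. -/
def RelaxedFeasible {X : Type*} [Fintype X] (H uh : (X → ℝ) → ℝ) (κ χ : ℝ)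
    (q : X → ℝ) (π : Measure (X → ℝ)) : Prop :=
  IsProbabilityMeasure π ∧ π (stdSimplex ℝ X) = 1 ∧ (∫ q', q' ∂π) = q ∧
    (κ / χ) * (∫ q', (H q' - H q) ∂π) ≤ ∫ q', (uh q' - uh q) ∂π

/-- `J̄(q)`, the value of the relaxed problem at `q`. -/
noncomputable def Jbar {X : Type*} [Fintype X] (H uh : (X → ℝ) → ℝ) (κ χ ρ : ℝ)
    (q : X → ℝ) : ℝ :=
  sSup {v | ∃ π : Measure (X → ℝ), RelaxedFeasible H uh κ χ q π ∧
    v = ρ * ∫ q', (H q' - H q) ∂π}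

/-- The (topological) support of a measure `π` on beliefs. -/
def suppM {X : Type*} [Fintype X] (π : Measure (X → ℝ)) : Set (X → ℝ) :=
  {q | ∀ U : Set (X → ℝ), IsOpen U → q ∈ U → π U ≠ 0}

lemma Continuous.integrable_of_ae_mem_compact {α E : Type*} [TopologicalSpace α] [T2Space α]
    [MeasurableSpace α] [OpensMeasurableSpace α] [NormedAddCommGroup E]
    {μ : Measure α} [IsFiniteMeasure μ] {K : Set α} (hK : IsCompact K)
    (hμK : ∀ᵐ x ∂μ, x ∈ K) {f : α → E} (hf : Continuous f) : Integrable f μ := by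
  rw [← Measure.restrict_eq_self_of_ae_mem hμK]
  exact hf.continuousOn.integrableOn_compact hK

lemma continuous_uhat {X A : Type*} [Fintype X] [Fintype A] [Nonempty A]
    (u : A → X → ℝ) : Continuous (uhat u) := by
  have h : uhat u = fun q => Finset.univ.sup' Finset.univ_nonempty
      (fun a => ∑ x : X, q x * u a x) := by
    funext q
    rw [uhat, Finset.sup'_univ_eq_ciSup]
  rw [h]
  exact Continuous.finset_sup'_apply Finset.univ_nonempty
    fun a _ => continuous_finsetSum _ fun x _ => (continuous_apply x).mul continuous_const

section Support

variable {X : Type*} [Fintype X] {π : Measure (X → ℝ)} {q : X → ℝ}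

lemma mem_of_mem_suppM {K : Set (X → ℝ)} (hK : IsClosed K) (hπK : ∀ᵐ x ∂π, x ∈ K)
    (hq : q ∈ suppM π) : q ∈ K :=
  by_contra fun hqK => hq _ hK.isOpen_compl hqK (ae_iff.1 hπK)

lemma measure_singleton_ne_zero_of_mem_suppM {S : Finset (X → ℝ)} (hπS : ∀ᵐ x ∂π, x ∈ S)
    (hq : q ∈ suppM π) : π {q} ≠ 0 := by
  intro hq0
  have hsub : ((S.erase q : Finset (X → ℝ)) : Set (X → ℝ))ᶜ ⊆ {q} ∪ {x | x ∉ S} := by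
    intro x
    simp only [Finset.coe_erase, mem_compl_iff, Set.mem_sdiff, Finset.mem_coe, mem_singleton_iff,
      mem_union, mem_ofPred_eq]
    tauto
  exact hq _ (S.erase q).finite_toSet.isClosed.isOpen_compl (by simp)
    (measure_mono_null hsub (measure_union_null hq0 (ae_iff.1 hπS)))

end Support

section ReplaceAtom

variable {α : Type*} [MeasurableSpace α] {π ν : Measure α} {a : α}

noncomputable def replaceAtom (π : Measure α) (a : α) (ν : Measure α) : Measure α :=
  π.restrict {a}ᶜ + π {a} • ν

lemma ae_replaceAtom {p : α → Prop} (hπ : ∀ᵐ x ∂π, p x) (hν : ∀ᵐ x ∂ν, p x) :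
    ∀ᵐ x ∂replaceAtom π a ν, p x := by
  rw [replaceAtom, ae_add_measure_iff]
  exact ⟨ae_restrict_of_ae hπ, Measure.ae_smul_measure hν _⟩

variable [MeasurableSingletonClass α]

instance isProbabilityMeasure_replaceAtom [IsProbabilityMeasure π] [IsProbabilityMeasure ν] :
    IsProbabilityMeasure (replaceAtom π a ν) := by
  constructor
  simp only [replaceAtom, Measure.add_apply, Measure.restrict_apply MeasurableSet.univ,
    univ_inter, Measure.smul_apply, measure_univ, smul_eq_mul, mul_one,
    measure_compl (measurableSet_singleton a) (measure_ne_top π _)]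
  exact tsub_add_cancel_of_le prob_le_one

lemma integral_replaceAtom {E : Type*} [NormedAddCommGroup E] [NormedSpace ℝ E] [CompleteSpace E]
    [IsFiniteMeasure π] {f : α → E} (hfπ : Integrable f π) (hfν : Integrable f ν) :
    ∫ x, f x ∂replaceAtom π a ν = ∫ x, f x ∂π + (π {a}).toReal • (∫ x, f x ∂ν - f a) := by
  rw [replaceAtom, integral_add_measure hfπ.restrict (hfν.smul_measure (measure_ne_top π _)),
    integral_smul_measure, ← integral_add_compl (measurableSet_singleton a) hfπ,
    Measure.restrict_singleton, integral_smul_measure, integral_dirac, smul_sub]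
  abel

lemma integral_sub_replaceAtom [IsFiniteMeasure π] [IsProbabilityMeasure ν] {g : α → ℝ}
    (hgπ : Integrable g π) (hgν : Integrable g ν) (b : α) :
    ∫ x, (g x - g b) ∂replaceAtom π a ν
      = ∫ x, (g x - g b) ∂π + (π {a}).toReal * ∫ x, (g x - g a) ∂ν := by
  rw [integral_replaceAtom (f := fun x => g x - g b) (hgπ.sub (integrable_const _))
      (hgν.sub (integrable_const _)),
    integral_sub hgν (integrable_const _), integral_sub hgν (integrable_const _)]
  simp only [integral_const, probReal_univ, smul_eq_mul]
  ring

end ReplaceAtom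

section RelaxedProblem

variable {X : Type*} [Fintype X] {H uh : (X → ℝ) → ℝ} {κ χ : ℝ} {q a : X → ℝ}
  {π ν : Measure (X → ℝ)}

lemma RelaxedFeasible.ae_mem_stdSimplex (h : RelaxedFeasible H uh κ χ q π) :
    ∀ᵐ x ∂π, x ∈ stdSimplex ℝ X :=
  haveI := h.1
  (mem_ae_iff_prob_eq_one (isClosed_stdSimplex ℝ X).measurableSet).2 h.2.1

lemma RelaxedFeasible.integrable {E : Type*} [NormedAddCommGroup E]
    (h : RelaxedFeasible H uh κ χ q π) {f : (X → ℝ) → E} (hf : Continuous f) :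
    Integrable f π :=
  haveI := h.1
  hf.integrable_of_ae_mem_compact (isCompact_stdSimplex ℝ X) h.ae_mem_stdSimplex

lemma relaxedFeasible_dirac (hq : q ∈ stdSimplex ℝ X) :
    RelaxedFeasible H uh κ χ q (Measure.dirac q) :=
  ⟨inferInstance, by simp [hq], integral_dirac _ _, by simp⟩

lemma RelaxedFeasible.replaceAtom (hH : Continuous H) (huh : Continuous uh)
    (hπ : RelaxedFeasible H uh κ χ q π) (hν : RelaxedFeasible H uh κ χ a ν) :
    RelaxedFeasible H uh κ χ q (replaceAtom π a ν) := by
  obtain ⟨hπprob, -, hπbar, hπcon⟩ := id hπ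
  obtain ⟨hνprob, -, hνbar, hνcon⟩ := id hν
  have hp : 0 ≤ (π {a}).toReal := ENNReal.toReal_nonneg
  refine ⟨inferInstance, ?_, ?_, ?_⟩
  · exact (mem_ae_iff_prob_eq_one (isClosed_stdSimplex ℝ X).measurableSet).1
      (ae_replaceAtom hπ.ae_mem_stdSimplex hν.ae_mem_stdSimplex)
  · rw [integral_replaceAtom (hπ.integrable continuous_id') (hν.integrable continuous_id'),
      hπbar, hνbar, sub_self, smul_zero, add_zero]
  · rw [integral_sub_replaceAtom (hπ.integrable hH) (hν.integrable hH),
      integral_sub_replaceAtom (hπ.integrable huh) (hν.integrable huh)]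
    nlinarith [mul_le_mul_of_nonneg_left hνcon hp]

lemma integral_sub_nonpos_of_isMaximizer (hH : Continuous H) (huh : Continuous uh)
    (hπ : RelaxedFeasible H uh κ χ q π)
    (hmax : ∀ π', RelaxedFeasible H uh κ χ q π' →
      ∫ x, (H x - H q) ∂π' ≤ ∫ x, (H x - H q) ∂π)
    (ha : π {a} ≠ 0) (hν : RelaxedFeasible H uh κ χ a ν) :
    ∫ x, (H x - H a) ∂ν ≤ 0 := by
  have hgain := hmax _ (hπ.replaceAtom hH huh hν)
  have := hπ.1
  have := hν.1
  rw [integral_sub_replaceAtom (hπ.integrable hH) (hν.integrable hH)] at hgain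
  exact nonpos_of_mul_nonpos_left (by linarith) (ENNReal.toReal_pos ha (measure_ne_top π _))

lemma Jbar_eq_zero {ρ : ℝ} (hρ : 0 ≤ ρ) (hq : q ∈ stdSimplex ℝ X)
    (hle : ∀ ν, RelaxedFeasible H uh κ χ q ν → ∫ x, (H x - H q) ∂ν ≤ 0) :
    Jbar H uh κ χ ρ q = 0 := by
  refine IsGreatest.csSup_eq ⟨⟨Measure.dirac q, relaxedFeasible_dirac hq, by simp⟩, ?_⟩
  rintro _ ⟨ν, hν, rfl⟩
  exact mul_nonpos_of_nonneg_of_nonpos hρ (hle ν hν)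

end RelaxedProblem

theorem stmt7_general
    {X A : Type*} [Fintype X] [Fintype A] [Nonempty A]
    (u : A → X → ℝ)
    (H : (X → ℝ) → ℝ) (hH : ContDiff ℝ 2 H)
    (κ χ ρ : ℝ) (hρ : 0 < ρ)
    (qbar : X → ℝ)
    (πstar : Measure (X → ℝ))
    (hfeas : RelaxedFeasible H (uhat u) κ χ qbar πstar)
    (hmax : ∀ π : Measure (X → ℝ), RelaxedFeasible H (uhat u) κ χ qbar π →
      ρ * (∫ q', (H q' - H qbar) ∂π) ≤ ρ * (∫ q', (H q' - H qbar) ∂πstar))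
    (hfin : ∃ S : Finset (X → ℝ), πstar (↑S) = 1) :
    ∀ q' ∈ suppM πstar, Jbar H (uhat u) κ χ ρ q' = 0 := by
  intro q' hq'
  obtain ⟨S, hS⟩ := hfin
  have := hfeas.1
  have hq'simplex : q' ∈ stdSimplex ℝ X :=
    mem_of_mem_suppM (isClosed_stdSimplex ℝ X) hfeas.ae_mem_stdSimplex hq'
  have hatom : πstar {q'} ≠ 0 := measure_singleton_ne_zero_of_mem_suppM
    ((mem_ae_iff_prob_eq_one S.finite_toSet.measurableSet).2 hS) hq'
  refine Jbar_eq_zero hρ.le hq'simplex fun ν hν => ?_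
  exact integral_sub_nonpos_of_isMaximizer hH.continuous (continuous_uhat u) hfeas
    (fun π hπ => le_of_mul_le_mul_left (hmax π hπ) hρ) hatom hν

/-- **key step in the proof of the paper's Proposition 3.** If `π*` is a
finitely supported maximizer of the relaxed problem at `q̄₀`, then for every `q'` in the
support of `π*`, the value of the relaxed problem at `q'` is zero: `J̄(q') = 0`. -/
theorem stmt7
    {X A : Type*} [Fintype X] [Fintype A] [Nonempty A]
    (hX : 2 ≤ Fintype.card X)
    (u : A → X → ℝ)
    (H : (X → ℝ) → ℝ) (hH : ContDiff ℝ 2 H)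
    (m : ℝ) (hm : 0 < m) (hHconv : StrongConvexOn (stdSimplex ℝ X) m H)
    (κ χ ρ : ℝ) (hκ : 0 < κ) (hχ : 0 < χ) (hρ : 0 < ρ)
    (qbar : X → ℝ) (hqbar : qbar ∈ stdSimplex ℝ X)
    (πstar : Measure (X → ℝ))
    (hfeas : RelaxedFeasible H (uhat u) κ χ qbar πstar)
    (hmax : ∀ π : Measure (X → ℝ), RelaxedFeasible H (uhat u) κ χ qbar π →
      ρ * (∫ q', (H q' - H qbar) ∂π) ≤ ρ * (∫ q', (H q' - H qbar) ∂πstar))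
    (hfin : ∃ S : Finset (X → ℝ), πstar (↑S) = 1) :
    ∀ q' ∈ suppM πstar, Jbar H (uhat u) κ χ ρ q' = 0 :=
  stmt7_general u H hH κ χ ρ hρ qbar πstar hfeas hmax hfin
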